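/- arXiv:1003.2442 — 4 statements merged into one kernel-verified Lean document; each statement's English description precedes it below -/
import Mathlib

section
/- The first and second derivatives of the function U₀(z) = 1/(1 + exp(z/√2)) satisfy |U₀'(z)| + |U₀''(z)| ≤ 2·exp(−|z|/√2) for every z ∈ ℝ. (This is the second part of Lemma 5.4, with explicit constants C = 2 and λ = 1/√2.) -/
/-- The standing-wave profile `U₀(z) = 1/(1 + exp(z/√2))`. -/
noncomputable def U₀ (z : ℝ) : ℝ := 1 / (1 + Real.exp (z / Real.sqrt 2))

/-!
`U₀` solves the logistic equation `U₀' = -U₀ (1 - U₀) / √2`, so differentiating once more gives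
`U₀'' = U₀ (1 - U₀) (1 - 2 U₀) / 2`. As `0 < U₀ < 1`, both derivatives are bounded in absolute value
by `U₀ (1 - U₀) ≤ min (U₀, 1 - U₀)`, and with `t = z / √2` one has `U₀ ≤ e^{-t}` and `1 - U₀ ≤ e^{t}`.
-/

open Real

lemma inv_one_add_exp_pos (t : ℝ) : 0 < (1 + exp t)⁻¹ := by positivity

lemma inv_one_add_exp_lt_one (t : ℝ) : (1 + exp t)⁻¹ < 1 :=
  inv_lt_one_of_one_lt₀ (lt_add_of_pos_right 1 (exp_pos t))

lemma inv_one_add_exp_le_exp_neg (t : ℝ) : (1 + exp t)⁻¹ ≤ exp (-t) := by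
  rw [exp_neg]
  exact inv_anti₀ (exp_pos t) (le_add_of_nonneg_left zero_le_one)

lemma one_sub_inv_one_add_exp_le_exp (t : ℝ) : 1 - (1 + exp t)⁻¹ ≤ exp t := by
  have h : 1 - (1 + exp t)⁻¹ = exp t / (1 + exp t) := by
    field_simp
    ring
  rw [h]
  exact div_le_self (exp_pos t).le (le_add_of_nonneg_right (exp_pos t).le)

lemma inv_one_add_exp_mul_one_sub_le (t : ℝ) :
    (1 + exp t)⁻¹ * (1 - (1 + exp t)⁻¹) ≤ exp (-|t|) := by
  set σ := (1 + exp t)⁻¹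
  have hσ : 0 < σ := inv_one_add_exp_pos t
  have hσ1 : σ < 1 := inv_one_add_exp_lt_one t
  rcases le_total 0 t with ht | ht
  · rw [abs_of_nonneg ht]
    calc σ * (1 - σ) ≤ σ := mul_le_of_le_one_right hσ.le (by linarith)
      _ ≤ exp (-t) := inv_one_add_exp_le_exp_neg t
  · rw [abs_of_nonpos ht, neg_neg]
    calc σ * (1 - σ) ≤ 1 - σ := mul_le_of_le_one_left (by linarith) hσ1.le
      _ ≤ exp t := one_sub_inv_one_add_exp_le_exp t

lemma U₀_eq_inv (z : ℝ) : U₀ z = (1 + exp (z / √2))⁻¹ := one_div _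

lemma U₀_pos (z : ℝ) : 0 < U₀ z := U₀_eq_inv z ▸ inv_one_add_exp_pos _

lemma U₀_lt_one (z : ℝ) : U₀ z < 1 := U₀_eq_inv z ▸ inv_one_add_exp_lt_one _

lemma U₀_mul_one_sub_U₀_le (z : ℝ) : U₀ z * (1 - U₀ z) ≤ exp (-|z| / √2) := by
  have h := inv_one_add_exp_mul_one_sub_le (z / √2)
  rwa [abs_div, abs_of_pos (sqrt_pos.2 two_pos), ← U₀_eq_inv, ← neg_div] at h

lemma hasDerivAt_U₀ (z : ℝ) : HasDerivAt U₀ (-(U₀ z * (1 - U₀ z)) / √2) z := by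
  have hexp : HasDerivAt (fun z => exp (z / √2)) (exp (z / √2) * (√2)⁻¹) z := by
    simpa using ((hasDerivAt_id z).div_const √2).exp
  have hpos : 0 < 1 + exp (z / √2) := by positivity
  rw [show U₀ = fun z => (1 + exp (z / √2))⁻¹ from funext U₀_eq_inv]
  refine ((hexp.const_add 1).fun_inv hpos.ne').congr_deriv ?_
  field_simp
  ring

lemma deriv_U₀ : deriv U₀ = fun z => -(U₀ z * (1 - U₀ z)) / √2 :=
  funext fun z => (hasDerivAt_U₀ z).deriv

lemma hasDerivAt_deriv_U₀ (z : ℝ) :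
    HasDerivAt (deriv U₀) (U₀ z * (1 - U₀ z) * (1 - 2 * U₀ z) / 2) z := by
  have h := hasDerivAt_U₀ z
  rw [deriv_U₀]
  refine (((h.fun_mul (h.const_sub 1)).fun_neg).div_const √2).congr_deriv ?_
  have hs : √2 * √2 = 2 := mul_self_sqrt zero_le_two
  field_simp
  linear_combination -(U₀ z * (1 - U₀ z) * (1 - 2 * U₀ z)) * hs

lemma abs_deriv_U₀_le (z : ℝ) : |deriv U₀ z| ≤ U₀ z * (1 - U₀ z) := by
  have hm : 0 ≤ U₀ z * (1 - U₀ z) := mul_nonneg (U₀_pos z).le (by linarith [U₀_lt_one z])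
  rw [(hasDerivAt_U₀ z).deriv, abs_div, abs_neg, abs_of_nonneg hm, abs_of_pos (by positivity)]
  exact div_le_self hm (one_le_sqrt.2 one_le_two)

lemma abs_deriv_deriv_U₀_le (z : ℝ) : |deriv (deriv U₀) z| ≤ U₀ z * (1 - U₀ z) := by
  have hU := U₀_pos z
  have hU1 := U₀_lt_one z
  have hm : 0 ≤ U₀ z * (1 - U₀ z) := mul_nonneg hU.le (by linarith)
  have h : |1 - 2 * U₀ z| ≤ 1 := abs_le.2 ⟨by linarith, by linarith⟩
  rw [(hasDerivAt_deriv_U₀ z).deriv, abs_div, abs_mul, abs_of_nonneg hm, abs_two]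
  nlinarith

theorem stmt_4 :
    ∀ z : ℝ, |deriv U₀ z| + |deriv (deriv U₀) z| ≤ 2 * Real.exp (-|z| / Real.sqrt 2) := by
  intro z
  linarith [abs_deriv_U₀_le z, abs_deriv_deriv_U₀_le z, U₀_mul_one_sub_U₀_le z]
end

section
/- (Lemma 5.7.) For all a, z ∈ ℝ, |U₀(z + a) − 𝟙_{(−∞,0]}(z)| ≤ exp(−|z + a|/√2) + 𝟙_{(−|a|,|a|]}(z), where 𝟙_S denotes the indicator function of the set S ⊆ ℝ. -/
/-! `U₀` is close to the step `𝟙_{(-∞,0]}` up to an exponentially small error `exp(-|w|/√2)`.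
Shifting the argument by `a` only moves the step when `z` lies in `(-|a|, |a|]`, and there the
error is at most `1` because both `U₀` and the step take values in `[0, 1]`. -/

open Set Real

lemma U₀_nonneg (w : ℝ) : 0 ≤ U₀ w := by
  unfold U₀
  positivity

lemma U₀_le_one (w : ℝ) : U₀ w ≤ 1 := by
  unfold U₀
  rw [div_le_one (by positivity)]
  linarith [exp_pos (w / √2)]

lemma U₀_le_exp_neg (w : ℝ) : U₀ w ≤ exp (-w / √2) := by
  rw [neg_div, exp_neg, U₀, one_div]
  gcongr
  linarith

lemma one_sub_U₀_le_exp (w : ℝ) : 1 - U₀ w ≤ exp (w / √2) := by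
  have he := exp_pos (w / √2)
  have hsub : 1 - U₀ w = exp (w / √2) / (1 + exp (w / √2)) := by
    unfold U₀
    field_simp
    ring
  rw [hsub, div_le_iff₀ (by positivity)]
  nlinarith

lemma abs_U₀_sub_indicator_Iic_le (w : ℝ) :
    |U₀ w - (Iic 0).indicator (fun _ => (1 : ℝ)) w| ≤ exp (-|w| / √2) := by
  rcases le_or_gt w 0 with hw | hw
  · rw [indicator_of_mem (mem_Iic.mpr hw), abs_of_nonpos (by linarith [U₀_le_one w]),
      abs_of_nonpos hw, neg_neg]
    linarith [one_sub_U₀_le_exp w]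
  · rw [indicator_of_notMem (notMem_Iic.mpr hw), sub_zero, abs_of_nonneg (U₀_nonneg w),
      abs_of_pos hw]
    exact U₀_le_exp_neg w

lemma indicator_Iic_add_eq_of_notMem_Ioc {a z : ℝ} (hz : z ∉ Ioc (-|a|) |a|) :
    (Iic 0).indicator (fun _ => (1 : ℝ)) (z + a) = (Iic 0).indicator (fun _ => (1 : ℝ)) z := by
  rw [mem_Ioc, not_and_or, not_lt, not_le] at hz
  rcases hz with hz | hz
  · rw [indicator_of_mem (mem_Iic.mpr (by linarith [le_abs_self a])),
      indicator_of_mem (mem_Iic.mpr (by linarith [abs_nonneg a]))]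
  · rw [indicator_of_notMem (notMem_Iic.mpr (by linarith [neg_abs_le a])),
      indicator_of_notMem (notMem_Iic.mpr (by linarith [abs_nonneg a]))]

theorem stmt_6 :
    ∀ a z : ℝ,
      |U₀ (z + a) - Set.indicator (Set.Iic (0 : ℝ)) (fun _ => (1 : ℝ)) z| ≤
        Real.exp (-|z + a| / Real.sqrt 2) +
          Set.indicator (Set.Ioc (-|a|) |a|) (fun _ => (1 : ℝ)) z := by
  intro a z
  by_cases hz : z ∈ Ioc (-|a|) |a|
  · have hstep : |U₀ (z + a) - (Iic 0).indicator (fun _ => (1 : ℝ)) z| ≤ 1 :=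
      abs_sub_le_of_nonneg_of_le (U₀_nonneg _) (U₀_le_one _)
        (indicator_nonneg (fun _ _ => zero_le_one) z) (indicator_le_self' (by simp) z)
    rw [indicator_of_mem hz]
    linarith [exp_pos (-|z + a| / √2)]
  · rw [indicator_of_notMem hz, add_zero, ← indicator_Iic_add_eq_of_notMem_Ioc hz]
    exact abs_U₀_sub_indicator_Iic_le (z + a)
end

section
/- There exist constants β > 0 and σ₀ > 0 such that for every σ ∈ (0, σ₀] and every z ∈ ℝ, −U₀'(z) − σ·f'(U₀(z)) ≥ 4σβ. -/
/-- The derivative `f'(u) = -3u² + 3u - 1/2` of the bistable nonlinearity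
`f(u) = u(1-u)(u-1/2)`. -/
noncomputable def f' (u : ℝ) : ℝ := -3 * u ^ 2 + 3 * u - 1 / 2

/-!
Writing `u = U₀ z ∈ (0, 1)`, the profile solves the logistic equation `U₀' = -u(1-u)/√2`,
and `f'(u) = 3u(1-u) - 1/2`. Hence
`-U₀'(z) - σ f'(u) = (1/√2 - 3σ) u(1-u) + σ/2 ≥ σ/2` as soon as `3σ ≤ 1/√2`,
so `β = 1/8` and `σ₀ = 1/5` work.
-/

open Real

lemma U₀_mul_one_sub_nonneg (z : ℝ) : 0 ≤ U₀ z * (1 - U₀ z) := by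
  have hE : 0 < exp (z / √2) := exp_pos _
  have h1 : 1 - U₀ z = exp (z / √2) / (1 + exp (z / √2)) := by
    rw [U₀]; field_simp; ring
  rw [h1, U₀]
  positivity

lemma f'_eq (u : ℝ) : f' u = 3 * (u * (1 - u)) - 1 / 2 := by
  rw [f']; ring

lemma neg_deriv_U₀_sub_mul_f'_eq (σ z : ℝ) :
    -deriv U₀ z - σ * f' (U₀ z) = (1 / √2 - 3 * σ) * (U₀ z * (1 - U₀ z)) + σ / 2 := by
  rw [(hasDerivAt_U₀ z).deriv, f'_eq]
  ring

lemma three_mul_le_inv_sqrt_two {σ : ℝ} (hσ : σ ≤ 1 / 5) : 3 * σ ≤ 1 / √2 := by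
  have hsqrt : √2 < 3 / 2 := by
    rw [sqrt_lt' (by norm_num)]; norm_num
  rw [le_div_iff₀ (by positivity)]
  nlinarith [sqrt_nonneg 2]

theorem stmt_9 :
    ∃ β : ℝ, 0 < β ∧ ∃ σ₀ : ℝ, 0 < σ₀ ∧
      ∀ σ : ℝ, σ ∈ Set.Ioc (0 : ℝ) σ₀ →
        ∀ z : ℝ, -deriv U₀ z - σ * f' (U₀ z) ≥ 4 * σ * β := by
  refine ⟨1 / 8, by norm_num, 1 / 5, by norm_num, ?_⟩
  rintro σ ⟨-, hσ⟩ z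
  rw [neg_deriv_U₀_sub_mul_f'_eq]
  have hcoef : 0 ≤ 1 / √2 - 3 * σ := sub_nonneg.2 (three_mul_le_inv_sqrt_two hσ)
  nlinarith [mul_nonneg hcoef (U₀_mul_one_sub_nonneg z)]
end

section
/- Bound on the time integral of the Laplacian of m (abstract form of the estimate in Lemma 2.1(b)): let α > 0, C₀ > 0, t > 0, and let m : ℝ → ℝ be differentiable and g, u : ℝ → ℝ be continuous with m'(s) = α·g(s) + u(s) − m(s) for all s ∈ [0, t]. If 0 ≤ m(s) ≤ C₀ and 0 ≤ u(s) ≤ C₀ for all s ∈ [0, t], then |∫₀ᵗ g(s) ds| ≤ (C₀ + C₀·t)/α. -/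
/-!
Integrating `m' = α g + u - m` over `[0, t]` gives
`α ∫₀ᵗ g = m t - m 0 - ∫₀ᵗ (u - m)`. Both `m` and `u` take values in `[0, C₀]`, so
`|m t - m 0| ≤ C₀` and `|u - m| ≤ C₀` pointwise, whence `|α ∫₀ᵗ g| ≤ C₀ + C₀ t`.
-/

open Set intervalIntegral

theorem mul_integral_eq_of_hasDerivAt_relaxation {α a b : ℝ} {m g u : ℝ → ℝ} (hab : a ≤ b)
    (hg : IntervalIntegrable g MeasureTheory.volume a b)
    (hu : IntervalIntegrable u MeasureTheory.volume a b)
    (hm : ∀ s ∈ Icc a b, HasDerivAt m (α * g s + u s - m s) s) :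
    α * ∫ s in a..b, g s = m b - m a - ∫ s in a..b, (u s - m s) := by
  rw [← uIcc_of_le hab] at hm
  have hm_int : IntervalIntegrable m MeasureTheory.volume a b :=
    (HasDerivAt.continuousOn hm).intervalIntegrable
  have hum_int : IntervalIntegrable (fun s => u s - m s) MeasureTheory.volume a b :=
    hu.sub hm_int
  have hftc : ∫ s in a..b, (α * g s + (u s - m s)) = m b - m a := by
    refine integral_eq_sub_of_hasDerivAt (fun s hs => ?_) ((hg.const_mul α).add hum_int)
    simpa only [add_sub_assoc] using hm s hs
  rw [← hftc, integral_add (hg.const_mul α) hum_int, integral_const_mul]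
  ring

theorem abs_integral_sub_le_of_mem_Icc {a b C : ℝ} {f h : ℝ → ℝ} (hab : a ≤ b)
    (hf : ∀ s ∈ Icc a b, f s ∈ Icc 0 C) (hh : ∀ s ∈ Icc a b, h s ∈ Icc 0 C) :
    |∫ s in a..b, (f s - h s)| ≤ C * (b - a) := by
  have hbound : ∀ s ∈ uIoc a b, ‖f s - h s‖ ≤ C := by
    intro s hs
    rw [uIoc_of_le hab] at hs
    obtain ⟨hf₀, hfC⟩ := hf s (Ioc_subset_Icc_self hs)
    obtain ⟨hh₀, hhC⟩ := hh s (Ioc_subset_Icc_self hs)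
    exact abs_sub_le_of_nonneg_of_le hf₀ hfC hh₀ hhC
  simpa only [Real.norm_eq_abs, abs_of_nonneg (sub_nonneg.2 hab)] using
    norm_integral_le_of_norm_le_const hbound

theorem stmt_12_general (α C₀ t : ℝ) (hα : 0 < α) (ht : 0 < t)
    (m g u : ℝ → ℝ)
    (hg : Continuous g) (hu : Continuous u)
    (hm : ∀ s ∈ Set.Icc (0 : ℝ) t, HasDerivAt m (α * g s + u s - m s) s)
    (hmb : ∀ s ∈ Set.Icc (0 : ℝ) t, 0 ≤ m s ∧ m s ≤ C₀)
    (hub : ∀ s ∈ Set.Icc (0 : ℝ) t, 0 ≤ u s ∧ u s ≤ C₀) :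
    |∫ s in (0 : ℝ)..t, g s| ≤ (C₀ + C₀ * t) / α := by
  have key := mul_integral_eq_of_hasDerivAt_relaxation ht.le
    (hg.intervalIntegrable 0 t) (hu.intervalIntegrable 0 t) hm
  have hm_ends : |m t - m 0| ≤ C₀ := by
    obtain ⟨hmt₀, hmtC⟩ := hmb t (right_mem_Icc.2 ht.le)
    obtain ⟨hm0₀, hm0C⟩ := hmb 0 (left_mem_Icc.2 ht.le)
    exact abs_sub_le_of_nonneg_of_le hmt₀ hmtC hm0₀ hm0C
  have hum : |∫ s in (0 : ℝ)..t, (u s - m s)| ≤ C₀ * t := by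
    simpa only [sub_zero] using abs_integral_sub_le_of_mem_Icc ht.le hub hmb
  rw [le_div_iff₀ hα, ← abs_of_pos hα, ← abs_mul, mul_comm, key]
  exact (abs_sub _ _).trans (add_le_add hm_ends hum)

theorem stmt_12 (α C₀ t : ℝ) (hα : 0 < α) (hC₀ : 0 < C₀) (ht : 0 < t)
    (m g u : ℝ → ℝ)
    (hg : Continuous g) (hu : Continuous u)
    (hm : ∀ s ∈ Set.Icc (0 : ℝ) t, HasDerivAt m (α * g s + u s - m s) s)
    (hmb : ∀ s ∈ Set.Icc (0 : ℝ) t, 0 ≤ m s ∧ m s ≤ C₀)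
    (hub : ∀ s ∈ Set.Icc (0 : ℝ) t, 0 ≤ u s ∧ u s ≤ C₀) :
    |∫ s in (0 : ℝ)..t, g s| ≤ (C₀ + C₀ * t) / α :=
  stmt_12_general α C₀ t hα ht m g u hg hu hm hmb hub
end
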